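/- arXiv:1908.09316 — 2 statements merged into one kernel-verified Lean document; each statement's English description precedes it below -/
import Mathlib

section
/- The compatibility condition for the thermic and caloric equations of state: for smooth functions A, B of (v,T) with T>0, the Poisson-bracket condition [p - A, ε - B] = 0 with respect to the symplectic form Ω = T⁻¹ dp∧dv − T⁻²dT∧(dε + p dv) is equivalent to ∂_v(T⁻²B) = ∂_T(T⁻¹A). -/
/-- Partial derivative of a function on ℝ⁴ = (p,T,ε,v)-space in the direction `e`. -/
noncomputable def pd (f : ℝ × ℝ × ℝ × ℝ → ℝ) (e x : ℝ × ℝ × ℝ × ℝ) : ℝ :=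
  fderiv ℝ f x e

/-- The Poisson bracket associated to the symplectic form
`Ω = T⁻¹ dp∧dv − T⁻² dT∧(dε + p dv)` on (p,T,ε,v)-space, written via the
inverse bivector `Π` of `Ω`, whose nonzero components are
`Π^{pε} = pT`, `Π^{pv} = −T`, `Π^{Tε} = T²`. -/
noncomputable def poissonBracket (f g : ℝ × ℝ × ℝ × ℝ → ℝ) (x : ℝ × ℝ × ℝ × ℝ) : ℝ :=
  let p := x.1; let T := x.2.1
  let ep : ℝ × ℝ × ℝ × ℝ := (1,0,0,0)
  let eT : ℝ × ℝ × ℝ × ℝ := (0,1,0,0)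
  let ee : ℝ × ℝ × ℝ × ℝ := (0,0,1,0)
  let ev : ℝ × ℝ × ℝ × ℝ := (0,0,0,1)
  p * T * (pd f ep x * pd g ee x - pd f ee x * pd g ep x)
    - T * (pd f ep x * pd g ev x - pd f ev x * pd g ep x)
    + T ^ 2 * (pd f eT x * pd g ee x - pd f ee x * pd g eT x)

noncomputable def projVT : (ℝ × ℝ × ℝ × ℝ) →L[ℝ] ℝ × ℝ :=
  (((ContinuousLinearMap.snd ℝ ℝ ℝ).comp
      ((ContinuousLinearMap.snd ℝ ℝ (ℝ × ℝ)).comp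
        (ContinuousLinearMap.snd ℝ ℝ (ℝ × ℝ × ℝ)))).prod
    ((ContinuousLinearMap.fst ℝ ℝ (ℝ × ℝ)).comp
      (ContinuousLinearMap.snd ℝ ℝ (ℝ × ℝ × ℝ))))

lemma projVT_apply (x : ℝ × ℝ × ℝ × ℝ) : projVT x = (x.2.2.2, x.2.1) := rfl

lemma pd_fst_sub (F : ℝ × ℝ → ℝ) (hF : ContDiff ℝ (⊤ : ℕ∞) F) (e x : ℝ × ℝ × ℝ × ℝ) :
    pd (fun x => x.1 - F (x.2.2.2, x.2.1)) e x
      = e.1 - fderiv ℝ F (x.2.2.2, x.2.1) (e.2.2.2, e.2.1) := by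
  have hF' : HasFDerivAt F (fderiv ℝ F (x.2.2.2, x.2.1)) (x.2.2.2, x.2.1) :=
    (hF.differentiable (by simp) (x.2.2.2, x.2.1)).hasFDerivAt
  have h : HasFDerivAt (fun x : ℝ × ℝ × ℝ × ℝ => x.1 - F (x.2.2.2, x.2.1))
      ((ContinuousLinearMap.fst ℝ ℝ (ℝ × ℝ × ℝ))
        - (fderiv ℝ F (x.2.2.2, x.2.1)).comp projVT) x := by
    have h2 : HasFDerivAt (fun x : ℝ × ℝ × ℝ × ℝ => F (x.2.2.2, x.2.1))
        ((fderiv ℝ F (x.2.2.2, x.2.1)).comp projVT) x := by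
      have := hF'.comp x (projVT.hasFDerivAt (x := x))
      exact this
    exact ((ContinuousLinearMap.fst ℝ ℝ (ℝ × ℝ × ℝ)).hasFDerivAt).sub h2
  simp [pd, h.fderiv, projVT_apply]

lemma pd_eps_sub (F : ℝ × ℝ → ℝ) (hF : ContDiff ℝ (⊤ : ℕ∞) F) (e x : ℝ × ℝ × ℝ × ℝ) :
    pd (fun x => x.2.2.1 - F (x.2.2.2, x.2.1)) e x
      = e.2.2.1 - fderiv ℝ F (x.2.2.2, x.2.1) (e.2.2.2, e.2.1) := by
  have hF' : HasFDerivAt F (fderiv ℝ F (x.2.2.2, x.2.1)) (x.2.2.2, x.2.1) :=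
    (hF.differentiable (by simp) (x.2.2.2, x.2.1)).hasFDerivAt
  have heps : HasFDerivAt (fun x : ℝ × ℝ × ℝ × ℝ => x.2.2.1)
      ((ContinuousLinearMap.fst ℝ ℝ ℝ).comp
        ((ContinuousLinearMap.snd ℝ ℝ (ℝ × ℝ)).comp
          (ContinuousLinearMap.snd ℝ ℝ (ℝ × ℝ × ℝ)))) x :=
    (((ContinuousLinearMap.fst ℝ ℝ ℝ).comp
        ((ContinuousLinearMap.snd ℝ ℝ (ℝ × ℝ)).comp
          (ContinuousLinearMap.snd ℝ ℝ (ℝ × ℝ × ℝ)))).hasFDerivAt)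
  have h2 : HasFDerivAt (fun x : ℝ × ℝ × ℝ × ℝ => F (x.2.2.2, x.2.1))
      ((fderiv ℝ F (x.2.2.2, x.2.1)).comp projVT) x := by
    have := hF'.comp x (projVT.hasFDerivAt (x := x))
    exact this
  have h : HasFDerivAt (fun x : ℝ × ℝ × ℝ × ℝ => x.2.2.1 - F (x.2.2.2, x.2.1)) _ x := heps.sub h2
  simp [pd, h.fderiv, projVT_apply]

lemma bracket_eval (A B : ℝ → ℝ → ℝ)
    (hA : ContDiff ℝ (⊤ : ℕ∞) (fun x : ℝ × ℝ => A x.1 x.2))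
    (hB : ContDiff ℝ (⊤ : ℕ∞) (fun x : ℝ × ℝ => B x.1 x.2))
    (x : ℝ × ℝ × ℝ × ℝ) :
    poissonBracket (fun x => x.1 - A x.2.2.2 x.2.1) (fun x => x.2.2.1 - B x.2.2.2 x.2.1) x
      = x.1 * x.2.1
        + x.2.1 * fderiv ℝ (fun q : ℝ × ℝ => B q.1 q.2) (x.2.2.2, x.2.1) (1, 0)
        - x.2.1 ^ 2 * fderiv ℝ (fun q : ℝ × ℝ => A q.1 q.2) (x.2.2.2, x.2.1) (0, 1) := by
  have hfA := pd_fst_sub (fun q : ℝ × ℝ => A q.1 q.2) hA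
  have hgB := pd_eps_sub (fun q : ℝ × ℝ => B q.1 q.2) hB
  simp only [poissonBracket, hfA, hgB]
  simp [Prod.mk_zero_zero]
  ring

lemma slice_v (F : ℝ × ℝ → ℝ) (hF : ContDiff ℝ (⊤ : ℕ∞) F) (v T : ℝ) :
    HasDerivAt (fun v' => F (v', T)) (fderiv ℝ F (v, T) (1, 0)) v := by
  have h := (hF.differentiable (by simp) (v, T)).hasFDerivAt
  have hc : HasDerivAt (fun v' : ℝ => ((v' : ℝ), T)) ((1 : ℝ), (0 : ℝ)) v :=
    (hasDerivAt_id v).prodMk (hasDerivAt_const v T)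
  exact h.comp_hasDerivAt v hc

lemma slice_T (F : ℝ × ℝ → ℝ) (hF : ContDiff ℝ (⊤ : ℕ∞) F) (v T : ℝ) :
    HasDerivAt (fun T' => F (v, T')) (fderiv ℝ F (v, T) (0, 1)) T := by
  have h := (hF.differentiable (by simp) (v, T)).hasFDerivAt
  have hc : HasDerivAt (fun T' : ℝ => ((v : ℝ), (T' : ℝ))) ((0 : ℝ), (1 : ℝ)) T :=
    (hasDerivAt_const T v).prodMk (hasDerivAt_id T)
  exact h.comp_hasDerivAt T hc

/-- The compatibility condition for the thermic equation of state `p = A(v,T)`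
and the caloric equation of state `ε = B(v,T)`: the Poisson bracket
`[p − A, ε − B]` (w.r.t. `Ω = T⁻¹ dp∧dv − T⁻² dT∧(dε + p dv)`) vanishes on the
common zero set (the Lagrangian state manifold) iff `(T⁻²B)_v = (T⁻¹A)_T`. -/
theorem poisson_compatibility
    (A B : ℝ → ℝ → ℝ)
    (hA : ContDiff ℝ (⊤ : ℕ∞) (fun x : ℝ × ℝ => A x.1 x.2))
    (hB : ContDiff ℝ (⊤ : ℕ∞) (fun x : ℝ × ℝ => B x.1 x.2))
    (f g : ℝ × ℝ × ℝ × ℝ → ℝ)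
    (hf : f = fun x => x.1 - A x.2.2.2 x.2.1)
    (hg : g = fun x => x.2.2.1 - B x.2.2.2 x.2.1) :
    (∀ x : ℝ × ℝ × ℝ × ℝ, 0 < x.2.1 → f x = 0 → g x = 0 → poissonBracket f g x = 0) ↔
      (∀ v T : ℝ, 0 < T →
        deriv (fun v' => B v' T / T ^ 2) v = deriv (fun T' => A v T' / T') T) := by
  subst hf hg
  have key : ∀ v T : ℝ, 0 < T →
      (deriv (fun v' => B v' T / T ^ 2) v = deriv (fun T' => A v T' / T') T ↔
        A v T * T + T * fderiv ℝ (fun q : ℝ × ℝ => B q.1 q.2) (v, T) (1, 0)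
          - T ^ 2 * fderiv ℝ (fun q : ℝ × ℝ => A q.1 q.2) (v, T) (0, 1) = 0) := by
    intro v T hT
    set Bv := fderiv ℝ (fun q : ℝ × ℝ => B q.1 q.2) (v, T) (1, 0) with hBv
    set AT := fderiv ℝ (fun q : ℝ × ℝ => A q.1 q.2) (v, T) (0, 1) with hAT
    have h1 : deriv (fun v' => B v' T / T ^ 2) v = Bv / T ^ 2 := by
      have := (slice_v (fun q : ℝ × ℝ => B q.1 q.2) hB v T).div_const (T ^ 2)
      exact this.deriv
    have h2 : deriv (fun T' => A v T' / T') T = (AT * T - A v T * 1) / T ^ 2 := by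
      have := (slice_T (fun q : ℝ × ℝ => A q.1 q.2) hA v T).div (hasDerivAt_id T) (ne_of_gt hT)
      rw [show ((fun T' => A v T') / id : ℝ → ℝ) = fun T' => A v T' / T' from rfl] at this
      simpa using this.deriv
    rw [h1, h2]
    constructor
    · intro h
      have hT2 : (T : ℝ) ^ 2 ≠ 0 := pow_ne_zero _ (ne_of_gt hT)
      field_simp at h
      nlinarith [h]
    · intro h
      have hT2 : (T : ℝ) ^ 2 ≠ 0 := pow_ne_zero _ (ne_of_gt hT)
      field_simp
      nlinarith [h]
  constructor
  · intro H v T hT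
    have := H (A v T, T, B v T, v) hT (by simp) (by simp)
    rw [bracket_eval A B hA hB] at this
    exact (key v T hT).mpr (by simpa using this)
  · intro H x hT hfx hgx
    rw [bracket_eval A B hA hB]
    have hp : x.1 = A x.2.2.2 x.2.1 := by have h := hfx; simp only [] at h; linarith [sub_eq_zero.mp h]
    have := (key x.2.2.2 x.2.1 hT).mp (H x.2.2.2 x.2.1 hT)
    rw [hp]
    linarith [this]
end

section
/- With μ(v,T) = α v^β T^γ (γ ≠ −1, 3γ+3β+2q−2 ≠ 0), the function p(r) = (C₂ + C₁^{−β−γ}(1+γ)(1−q) r^{(3γ+3β+2q−2)/(q−1)} / (2αR^β(3γ+3β+2q−2)))^{1/(1+γ)}, with v(r) = R C₁ r^{3/(1−q)} and T(r)=p(r)v(r)/R, satisfies p'(r) = −r/(2μ(v(r),T(r))). -/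
/-! Since `p ^ (1 + γ) = C₂ + K r ^ E` with `E = (3γ+3β+2q-2)/(q-1)`, the chain rule gives
`p' = K E r ^ (E - 1) / ((1 + γ) p ^ γ)`. Along the power laws for `v` and `T`,
`μ = α R ^ β C₁ ^ (β + γ) r ^ (3(β + γ)/(1 - q)) p ^ γ`, and `E - 1 = 1 - 3(β + γ)/(1 - q)`,
so the powers of `r` and `p` match and `K` was chosen to make the constants agree. -/

open Real

lemma power_law_along_profile {R C r b : ℝ} (α s β γ : ℝ) (hR : 0 < R) (hC : 0 < C) (hr : 0 < r)
    (hb : 0 < b) :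
    α * (R * C * r ^ s) ^ β * (b * (R * C * r ^ s) / R) ^ γ
      = α * R ^ β * C ^ (β + γ) * r ^ (s * (β + γ)) * b ^ γ := by
  rw [show b * (R * C * r ^ s) / R = b * C * r ^ s by field_simp,
    mul_rpow (by positivity) (by positivity), mul_rpow hR.le hC.le,
    mul_rpow (by positivity) (by positivity), mul_rpow hb.le hC.le,
    ← rpow_mul hr.le, ← rpow_mul hr.le, mul_add, rpow_add hr, rpow_add hC]
  ring

lemma rpow_one_div_one_add_sub_one {B γ : ℝ} (hB : 0 < B) (hγ : 1 + γ ≠ 0) :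
    B ^ (1 / (1 + γ) - 1) = ((B ^ (1 / (1 + γ))) ^ γ)⁻¹ := by
  rw [← rpow_mul hB.le, ← rpow_neg hB.le]
  congr 1
  field_simp
  ring

lemma profile_exponent_sub_one {q : ℝ} (β γ : ℝ) (hq : q ≠ 1) :
    (3 * γ + 3 * β + 2 * q - 2) / (q - 1) - 1 = 1 - 3 / (1 - q) * (β + γ) := by
  field_simp
  ring

/-- For the medium `μ(v,T) = α v^β T^γ` (`γ ≠ −1`, `3γ+3β+2q−2 ≠ 0`), the function
`p(r) = (C₂ + C₁^{−β−γ}(1+γ)(1−q) r^{(3γ+3β+2q−2)/(q−1)}/(2αR^β(3γ+3β+2q−2)))^{1/(1+γ)}`,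
with `v(r) = R C₁ r^{3/(1−q)}` and `T(r) = p(r)v(r)/R`, satisfies
`p'(r) = −r/(2μ(v(r),T(r)))` on an interval where the base of the power is
positive and `p, T, v > 0`. -/
theorem ideal_gas_solution_case3
    (α R C₁ C₂ q β γ : ℝ) (hα : 0 < α) (hR : 0 < R) (hC₁ : 0 < C₁)
    (hq : q ≠ 1) (hγ : γ ≠ -1) (hβγq : 3 * γ + 3 * β + 2 * q - 2 ≠ 0)
    (p v T : ℝ → ℝ) (μ : ℝ → ℝ → ℝ)
    (hp : ∀ r, p r = (C₂ + C₁ ^ (-β - γ) * (1 + γ) * (1 - q)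
        / (2 * α * R ^ β * (3 * γ + 3 * β + 2 * q - 2))
        * r ^ ((3 * γ + 3 * β + 2 * q - 2) / (q - 1))) ^ (1 / (1 + γ)))
    (hv : ∀ r, v r = R * C₁ * r ^ (3 / (1 - q)))
    (hT : ∀ r, T r = p r * v r / R)
    (hμ : ∀ v' T', μ v' T' = α * v' ^ β * T' ^ γ) :
    ∀ r : ℝ, 0 < r →
      0 < C₂ + C₁ ^ (-β - γ) * (1 + γ) * (1 - q)
          / (2 * α * R ^ β * (3 * γ + 3 * β + 2 * q - 2))
          * r ^ ((3 * γ + 3 * β + 2 * q - 2) / (q - 1)) →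
      0 < p r → 0 < T r → 0 < v r →
      deriv p r = -r / (2 * μ (v r) (T r)) := by
  intro r hr hbase hpr _ _
  have h1γ : 1 + γ ≠ 0 := fun h => hγ (by linarith)
  set K := C₁ ^ (-β - γ) * (1 + γ) * (1 - q) / (2 * α * R ^ β * (3 * γ + 3 * β + 2 * q - 2))
  set E := (3 * γ + 3 * β + 2 * q - 2) / (q - 1)
  set B := C₂ + K * r ^ E
  have hdp : HasDerivAt p (K * (E * r ^ (E - 1)) * (1 / (1 + γ)) * B ^ (1 / (1 + γ) - 1)) r := by
    rw [funext hp]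
    exact (((hasDerivAt_rpow_const (Or.inl hr.ne')).const_mul K).const_add C₂).rpow_const
      (Or.inl hbase.ne')
  rw [hdp.deriv, hμ, hT, hv, power_law_along_profile α _ β γ hR hC₁ hr hpr,
    rpow_one_div_one_add_sub_one hbase h1γ, ← hp r, profile_exponent_sub_one β γ hq,
    rpow_sub hr, rpow_one]
  simp only [K, E]
  rw [show -β - γ = -(β + γ) by ring, rpow_neg hC₁.le]
  -- otherwise `field_simp` rewrites the factor into a form it no longer knows to be nonzero
  generalize 3 * γ + 3 * β + 2 * q - 2 = D at hβγq ⊢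
  field_simp
  ring
end
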